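/- arXiv:2502.02112 — 2 statements merged into one kernel-verified Lean document; each statement's English description precedes it below -/
import Mathlib

section
/- Let Z = {z_1,…,z_n} with symmetric non-negative d_Z, and suppose the triplet merge tree TMT(Z) contains, for each j ∈ {2,…,n}, a triple (z_j, b_j, z_i) with i < j such that [z_j] dies at b_j and ρ_{0,b_j}([z_j]) = [z_i]. Then for every b > 0, ker(ρ_{0b}) is spanned over 𝔽₂ by the set { [z_j] + [z_i] : (z_j, b_j, z_i) ∈ TMT(Z) and b_j ≤ b }. -/
/-!
`ker ρ_{0b}` is spanned by the classes `[x] + [y]` of pairs `x, y` in a common component of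
`VR_b`. Over `𝔽₂` the pairs whose class lies in a given subspace form an equivalence relation,
so it suffices to reach each such pair from the merge-tree generators. If `x < y` are joined at
scale `b`, then `y` cannot die after `b`, so the generator `[y] + [p y]` is present, `p y < y`
is still joined to `x`, and induction on the larger index finishes.
-/

open scoped NNReal
open Module

/-- 1-skeleton of the Vietoris–Rips filtration of `(Z, d)`: edgeless at `r = 0`;
for `r > 0` it has an edge between distinct points at distance at most `r`.
(The adjacency is symmetrized; for symmetric `d` this agrees with the usual definition.) -/
def VR {Z : Type*} (d : Z → Z → ℝ≥0) (r : ℝ≥0) : SimpleGraph Z where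
  Adj z z' := z ≠ z' ∧ 0 < r ∧ d z z' ≤ r ∧ d z' z ≤ r
  symm := by constructor; intro z z' h; exact ⟨h.1.symm, h.2.1, h.2.2.2, h.2.2.1⟩
  loopless := by constructor; intro z h; exact h.1 rfl

/-- "Closed" Vietoris–Rips graph, used for `ker⁺`: at `r = 0` it has the edges between
distinct points at distance `0`; for `r > 0` it coincides with `VR d r`. -/
def VRc {Z : Type*} (d : Z → Z → ℝ≥0) (r : ℝ≥0) : SimpleGraph Z where
  Adj z z' := z ≠ z' ∧ d z z' ≤ r ∧ d z' z ≤ r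
  symm := by constructor; intro z z' h; exact ⟨h.1.symm, h.2.2, h.2.1⟩
  loopless := by constructor; intro z h; exact h.1 rfl

lemma VR_mono {Z : Type*} (d : Z → Z → ℝ≥0) {r s : ℝ≥0} (hrs : r ≤ s) :
    VR d r ≤ VR d s := by
  intro a b hab
  exact ⟨hab.1, hab.2.1.trans_le hrs, hab.2.2.1.trans hrs, hab.2.2.2.trans hrs⟩

/-- The structure map `ρ` from `H₀` of the edgeless graph on `Z` (the free `𝔽₂`-vector
space on `Z`, identified with `Z → 𝔽₂`) to `H₀(G)` (the free `𝔽₂`-vector space on the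
connected components of `G`), summing the coefficients over each connected component. -/
noncomputable def rho {Z : Type*} [Fintype Z] (G : SimpleGraph Z) :
    (Z → ZMod 2) →ₗ[ZMod 2] (G.ConnectedComponent → ZMod 2) where
  toFun v c :=
    ∑ z ∈ @Finset.filter _ (fun z => G.connectedComponentMk z = c)
      (Classical.decPred _) Finset.univ, v z
  map_add' := by
    intro v w; funext c; simp [Finset.sum_add_distrib]
  map_smul' := by
    intro m v; funext c; simp [Finset.mul_sum]

/-- `ker (ρ_{0r})` for the (open) Vietoris–Rips graph `VR d r`. -/
noncomputable def kerVR {Z : Type*} [Fintype Z] (d : Z → Z → ℝ≥0) (r : ℝ≥0) :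
    Submodule (ZMod 2) (Z → ZMod 2) := LinearMap.ker (rho (VR d r))

/-- `ker⁺_b`: kernel of `ρ_{0b}`.  For `b > 0` this is `ker (ρ_{0b})` of `VR d b`;
at `b = 0` it is the span of the classes `[z_j] + [z_i]` with `d z_i z_j = 0`. -/
noncomputable def kerP {Z : Type*} [Fintype Z] (d : Z → Z → ℝ≥0) (b : ℝ≥0) :
    Submodule (ZMod 2) (Z → ZMod 2) := LinearMap.ker (rho (VRc d b))

/-- `ker⁻_b = ⋃_{0 ≤ r < b} ker (ρ_{0r})`, as a submodule (the union is increasing). -/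
noncomputable def kerM {Z : Type*} [Fintype Z] (d : Z → Z → ℝ≥0) (b : ℝ≥0) :
    Submodule (ZMod 2) (Z → ZMod 2) := ⨆ r : {r : ℝ≥0 // r < b}, kerVR d (r : ℝ≥0)

/-- Multiplicity of the death value `a` in the barcode: `m(a) = dim ker⁺_a − dim ker⁻_a`. -/
noncomputable def mult {Z : Type*} [Fintype Z] (d : Z → Z → ℝ≥0) (a : ℝ≥0) : ℕ :=
  finrank (ZMod 2) (kerP d a) - finrank (ZMod 2) (kerM d a)

/-- The induced block function `M_f(a,b)` for the identity relabelling bijection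
`f : (Fin n, dX) → (Fin n, dZ)`, `x_i ↦ z_i` (so that `f₀ = id` on `H₀(VR₀)`):
`dim ((f₀ ker⁺_a(X) ∩ ker⁺_b(Z)) / (f₀ ker⁻_a(X) ∩ ker⁺_b(Z) + f₀ ker⁺_a(X) ∩ ker⁻_b(Z)))`. -/
noncomputable def blockFn {Z : Type*} [Fintype Z] (dX dZ : Z → Z → ℝ≥0) (a b : ℝ≥0) : ℕ :=
  finrank (ZMod 2)
    ((↥(kerP dX a ⊓ kerP dZ b)) ⧸
      ((kerM dX a ⊓ kerP dZ b ⊔ kerP dX a ⊓ kerM dZ b).comap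
        (kerP dX a ⊓ kerP dZ b).subtype))

/-- `[z_j]` dies at value `b`: for `b > 0`, the component of `z_j` contains no `z_i`
with `i < j` at all parameters `ℓ < b`, and merges with such a component at `b`;
for `b = 0`, `z_j` lies in the same connected component at parameter `0`
(with the distance-`0` edges) as some `z_i` with `i < j`. -/
def diesAt {n : ℕ} (d : Fin n → Fin n → ℝ≥0) (j : Fin n) (b : ℝ≥0) : Prop :=
  (0 < b ∧ (∀ ℓ : ℝ≥0, ℓ < b → ∀ i : Fin n, i < j → ¬ (VR d ℓ).Reachable i j) ∧
    ∃ i : Fin n, i < j ∧ (VR d b).Reachable i j) ∨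
  (b = 0 ∧ ∃ i : Fin n, i < j ∧ (VRc d 0).Reachable i j)

section Rho

variable {Z : Type*} [Fintype Z]

open Classical in
lemma rho_apply (G : SimpleGraph Z) (v : Z → ZMod 2) (c : G.ConnectedComponent) :
    rho G v c = ∑ z, if G.connectedComponentMk z = c then v z else 0 := by
  simp only [rho, LinearMap.coe_mk, AddHom.coe_mk]
  rw [Finset.sum_filter]

open Classical in
lemma rho_single [DecidableEq Z] (G : SimpleGraph Z) (z : Z) (c : G.ConnectedComponent) :
    rho G (Pi.single z 1) c = if G.connectedComponentMk z = c then 1 else 0 := by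
  rw [rho_apply, Finset.sum_eq_single z (fun y _ hyz => by simp [hyz]) (by simp)]
  simp

lemma rho_single_add_single_of_reachable [DecidableEq Z] {G : SimpleGraph Z} {x y : Z}
    (h : G.Reachable x y) :
    rho G (Pi.single x 1 + Pi.single y 1) = 0 := by
  funext c
  rw [map_add, Pi.add_apply, rho_single, rho_single, SimpleGraph.ConnectedComponent.sound h]
  exact CharTwo.add_self_eq_zero _

open Classical in
lemma sum_smul_single_out_apply [DecidableEq Z] (G : SimpleGraph Z) (v : Z → ZMod 2) (w : Z) :
    (∑ z, v z • Pi.single (G.connectedComponentMk z).out (1 : ZMod 2)) w =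
      if (G.connectedComponentMk w).out = w then rho G v (G.connectedComponentMk w) else 0 := by
  simp only [Finset.sum_apply, Pi.smul_apply, Pi.single_apply, smul_eq_mul, mul_ite, mul_one,
    mul_zero]
  split_ifs with hw
  · rw [rho_apply]
    refine Finset.sum_congr rfl fun z _ => if_congr ⟨fun h => ?_, fun h => ?_⟩ rfl rfl
    · rw [h]
      exact (Quot.out_eq _).symm
    · rw [h, hw]
  · refine Finset.sum_eq_zero fun z _ => if_neg fun h => hw ?_
    rw [h]
    exact congrArg Quot.out (Quot.out_eq _)

lemma ker_rho_eq_span_reachable [DecidableEq Z] (G : SimpleGraph Z) :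
    LinearMap.ker (rho G) = Submodule.span (ZMod 2)
      {v | ∃ x y, G.Reachable x y ∧ v = Pi.single x 1 + Pi.single y 1} := by
  apply le_antisymm
  · intro v hv
    have hcollect : ∑ z, v z • Pi.single (G.connectedComponentMk z).out (1 : ZMod 2) = 0 := by
      funext w
      rw [sum_smul_single_out_apply, LinearMap.mem_ker.mp hv]
      simp
    have hv_eq : v = ∑ z, v z • (Pi.single z 1 + Pi.single (G.connectedComponentMk z).out 1) := by
      simp only [smul_add, Finset.sum_add_distrib]
      rw [hcollect, add_zero]
      simp only [← Pi.single_smul, smul_eq_mul, mul_one, Finset.univ_sum_single]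
    rw [hv_eq]
    refine Submodule.sum_mem _ fun z _ => Submodule.smul_mem _ _ (Submodule.subset_span ?_)
    exact ⟨z, _, (SimpleGraph.ConnectedComponent.exact (Quot.out_eq _)).symm, rfl⟩
  · rw [Submodule.span_le]
    rintro v ⟨x, y, hxy, rfl⟩
    exact LinearMap.mem_ker.mpr (rho_single_add_single_of_reachable hxy)

end Rho

section PairRelation

variable {ι V : Type*} [AddCommGroup V] [Module (ZMod 2) V] (M : Submodule (ZMod 2) V)

lemma add_mem_of_add_mem_of_add_mem {x y z : V} (hxy : x + y ∈ M) (hyz : y + z ∈ M) :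
    x + z ∈ M := by
  have h : (x + y) + (y + z) = x + z := by
    rw [add_assoc, ← add_assoc y, ZModModule.add_self, zero_add]
  exact h ▸ M.add_mem hxy hyz

lemma add_mem_of_reachable [LinearOrder ι] [WellFoundedLT ι] (f : ι → V)
    (G : SimpleGraph ι) (p : ι → ι)
    (hp : ∀ x y, x < y → G.Reachable x y → p y < y ∧ G.Reachable (p y) y ∧ f y + f (p y) ∈ M)
    {x y : ι} (hxy : G.Reachable x y) : f x + f y ∈ M := by
  wlog hle : x ≤ y generalizing x y
  · rw [add_comm]
    exact this hxy.symm (le_of_not_ge hle)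
  induction y using WellFoundedLT.induction generalizing x with
  | _ y ih =>
    rcases hle.eq_or_lt with rfl | hlt
    · rw [ZModModule.add_self]
      exact M.zero_mem
    obtain ⟨hpy, hreach, hmem⟩ := hp x y hlt hxy
    have hxp : G.Reachable x (p y) := hxy.trans hreach.symm
    have hxp_mem : f x + f (p y) ∈ M := by
      rcases le_total x (p y) with h | h
      · exact ih (p y) hpy hxp h
      · rw [add_comm]
        exact ih x hlt hxp.symm h
    rw [add_comm] at hmem
    exact add_mem_of_add_mem_of_add_mem M hxp_mem hmem

end PairRelation

lemma VRc_mono {Z : Type*} (d : Z → Z → ℝ≥0) {r s : ℝ≥0} (hrs : r ≤ s) :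
    VRc d r ≤ VRc d s := fun _ _ h => ⟨h.1, h.2.1.trans hrs, h.2.2.trans hrs⟩

lemma VRc_le_VR {Z : Type*} (d : Z → Z → ℝ≥0) {b : ℝ≥0} (hb : 0 < b) :
    VRc d b ≤ VR d b := fun _ _ h => ⟨h.1, hb, h.2.1, h.2.2⟩

lemma diesAt.le_of_reachable {n : ℕ} {d : Fin n → Fin n → ℝ≥0} {i j : Fin n} {t b : ℝ≥0}
    (hdies : diesAt d j t) (hij : i < j) (hb : 0 < b) (hreach : (VRc d b).Reachable i j) :
    t ≤ b := by
  rcases hdies with ⟨-, hsep, -⟩ | ⟨rfl, -⟩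
  · by_contra! hlt
    exact hsep b hlt i hij (hreach.mono (VRc_le_VR d hb))
  · exact zero_le

theorem stmt4_general {n : ℕ} (d : Fin n → Fin n → ℝ≥0)
    (t : Fin n → ℝ≥0) (p : Fin n → Fin n)
    (ht : ∀ j : Fin n, 0 < (j : ℕ) →
      p j < j ∧ diesAt d j (t j) ∧ (VRc d (t j)).Reachable (p j) j)
    (b : ℝ≥0) (hb : 0 < b) :
    kerP d b = Submodule.span (ZMod 2)
      {v : Fin n → ZMod 2 | ∃ j : Fin n, 0 < (j : ℕ) ∧ t j ≤ b ∧
        v = Pi.single j 1 + Pi.single (p j) 1} := by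
  rw [kerP, ker_rho_eq_span_reachable]
  apply le_antisymm
  · rw [Submodule.span_le]
    rintro v ⟨x, y, hxy, rfl⟩
    refine add_mem_of_reachable _ (Pi.single · 1) (VRc d b) p (fun i j hij hreach => ?_) hxy
    have hj : 0 < (j : ℕ) := (Nat.zero_le _).trans_lt hij
    obtain ⟨hpj, hdies, hpj_reach⟩ := ht j hj
    have htb : t j ≤ b := hdies.le_of_reachable hij hb hreach
    exact ⟨hpj, hpj_reach.mono (VRc_mono d htb), Submodule.subset_span ⟨j, hj, htb, rfl⟩⟩
  · refine Submodule.span_mono ?_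
    rintro v ⟨j, hj, htj, rfl⟩
    exact ⟨j, p j, ((ht j hj).2.2.mono (VRc_mono d htj)).symm, rfl⟩

/-- if a triplet merge tree is given by death values `t j` and merge
targets `p j < j` (with `[z_j]` dying at `t j` and `ρ_{0, t j} [z_j] = [z_{p j}]`),
then for every `b > 0`, `ker ρ_{0b}` is spanned over `𝔽₂` by the classes
`[z_j] + [z_{p j}]` with `t j ≤ b`. -/
theorem stmt4 {n : ℕ} (d : Fin n → Fin n → ℝ≥0) (hsym : ∀ i j, d i j = d j i)
    (t : Fin n → ℝ≥0) (p : Fin n → Fin n)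
    (ht : ∀ j : Fin n, 0 < (j : ℕ) →
      p j < j ∧ diesAt d j (t j) ∧ (VRc d (t j)).Reachable (p j) j)
    (b : ℝ≥0) (hb : 0 < b) :
    kerP d b = Submodule.span (ZMod 2)
      {v : Fin n → ZMod 2 | ∃ j : Fin n, 0 < (j : ℕ) ∧ t j ≤ b ∧
        v = Pi.single j 1 + Pi.single (p j) 1} :=
  stmt4_general d t p ht b hb
end

section
/- Let X, Z be finite sets of cardinality n with symmetric non-negative functions, f : X → Z a bijection with |d_X(x,y) − d_Z(f(x), f(y))| < ε for all x, y, and q ≥ 1 a natural number. Then the induced matching distance satisfies d_f^q(B(X), B(Z)) = ( Σ_{a,b ∈ ℝ≥0} M_f(a,b) · |a−b|^q )^{1/q} ≤ (n−1)^{1/q} · ε. -/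
/-!
The ε-interleaving of the two Vietoris–Rips filtrations gives `ker⁺_a(X) ≤ ker⁻_b(Z)` once
`a + ε ≤ b`, and symmetrically, so `M_f(a,b) = 0` unless `|a - b| ≤ ε`. For fixed `a`, `M_f(a,b)`
is the jump at `b` of `b ↦ dim (ker⁻_a(X) + ker⁺_a(X) ∩ ker⁺_b(Z))`, so the `b`-sum telescopes to
at most `dim ker⁺_a(X) - dim ker⁻_a(X)`, the jump of `a ↦ dim ker⁺_a(X)`; summing over `a` gives
at most `dim ker ρ ≤ n - 1`. Hence `Σ M_f(a,b) |a - b|^q ≤ (n - 1) ε^q`.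
-/

open scoped NNReal
open Module

section Jumps

variable {α : Type*} [LinearOrder α] {g g' : α → ℕ} {l : ℕ}

/- `g' x` plays the role of the left limit of the step function `g` at `x`, so `g x - g' x` is
the jump of `g` at `x`. -/
theorem add_sum_sub_le_of_jumps (hle : ∀ x, g' x ≤ g x) (hjump : ∀ x y, x < y → g x ≤ g' y)
    (hl : ∀ x, l ≤ g' x) (s : Finset α) {b : α} (hb : ∀ x ∈ s, x < b) :
    l + ∑ x ∈ s, (g x - g' x) ≤ g' b := by
  classical
  induction s using Finset.induction_on_max generalizing b with
  | empty => simpa using hl b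
  | insert a s hs ih =>
    rw [Finset.sum_insert fun has => lt_irrefl a (hs a has)]
    have hsum := ih hs
    have hab := hjump a b (hb a (Finset.mem_insert_self a s))
    have := hle a
    omega

theorem sum_sub_le_of_jumps [NoMaxOrder α] {m : ℕ} (hle : ∀ x, g' x ≤ g x)
    (hjump : ∀ x y, x < y → g x ≤ g' y) (hl : ∀ x, l ≤ g' x) (hm : ∀ x, g x ≤ m)
    (s : Finset α) : ∑ x ∈ s, (g x - g' x) ≤ m - l := by
  rcases s.eq_empty_or_nonempty with rfl | hs
  · simp
  obtain ⟨b, hb⟩ := exists_gt (s.max' hs)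
  have hsum := add_sum_sub_le_of_jumps hle hjump hl s fun x hx => (s.le_max' x hx).trans_lt hb
  have hb' := (hle b).trans (hm b)
  omega

end Jumps

theorem finite_support_of_forall_sum_le {ι : Type*} {f : ι → ℕ} {m : ℕ}
    (h : ∀ s : Finset ι, ∑ i ∈ s, f i ≤ m) : (Function.support f).Finite := by
  by_contra hinf
  obtain ⟨t, hts, htc⟩ := Set.Infinite.exists_subset_card_eq hinf (m + 1)
  have hcard := t.card_nsmul_le_sum f 1 fun i hi => Nat.one_le_iff_ne_zero.mpr (hts hi)
  rw [smul_eq_mul, mul_one] at hcard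
  have := hcard.trans (h t)
  omega

section Submodules

variable {K V : Type*} [DivisionRing K] [AddCommGroup V] [Module K V]

theorem finrank_quotient_comap_subtype_eq_zero {S T : Submodule K V} (h : S ≤ T) :
    finrank K (S ⧸ T.comap S.subtype) = 0 := by
  rw [Submodule.comap_subtype_eq_top.mpr h]
  exact finrank_zero_of_subsingleton

theorem finrank_quotient_add_finrank_sup_inf [FiniteDimensional K V] {A A' B B' : Submodule K V}
    (hA : A' ≤ A) (hB : B' ≤ B) :
    finrank K (↥(A ⊓ B) ⧸ (A' ⊓ B ⊔ A ⊓ B').comap (A ⊓ B).subtype) + finrank K ↥(A' ⊔ A ⊓ B')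
      = finrank K ↥(A' ⊔ A ⊓ B) := by
  have hS : A' ⊓ B ⊔ A ⊓ B' ≤ A ⊓ B := sup_le (inf_le_inf_right _ hA) (inf_le_inf_left _ hB)
  have hquot := Submodule.finrank_quotient_add_finrank ((A' ⊓ B ⊔ A ⊓ B').comap (A ⊓ B).subtype)
  rw [(Submodule.comapSubtypeEquivOfLe hS).finrank_eq] at hquot
  have e1 := Submodule.finrank_sup_add_finrank_inf_eq A' (A ⊓ B)
  have e2 := Submodule.finrank_sup_add_finrank_inf_eq A' (A ⊓ B')
  have e3 := Submodule.finrank_sup_add_finrank_inf_eq (A' ⊓ B) (A ⊓ B')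
  rw [← inf_assoc, inf_eq_left.mpr hA] at e1 e2
  have hinf : A' ⊓ B ⊓ (A ⊓ B') = A' ⊓ B' := by
    rw [inf_inf_inf_comm, inf_eq_left.mpr hA, inf_eq_right.mpr hB]
  rw [hinf] at e3
  omega

end Submodules

section Graphs

variable {Z : Type*}

theorem VR_le_VRc (d : Z → Z → ℝ≥0) {r s : ℝ≥0} (hrs : r ≤ s) : VR d r ≤ VRc d s :=
  fun _ _ h => ⟨h.1, h.2.2.1.trans hrs, h.2.2.2.trans hrs⟩

theorem VRc_le_VR_of_lt (d : Z → Z → ℝ≥0) {r s : ℝ≥0} (hrs : r < s) : VRc d r ≤ VR d s :=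
  fun _ _ h => ⟨h.1, pos_of_gt hrs, h.2.1.trans hrs.le, h.2.2.trans hrs.le⟩

variable [Fintype Z]

theorem mem_ker_rho_iff (G : SimpleGraph Z) (v : Z → ZMod 2) :
    v ∈ LinearMap.ker (rho G) ↔ ∀ c, ∑ z ∈ @Finset.filter _ (fun z => G.connectedComponentMk z = c)
      (Classical.decPred _) Finset.univ, v z = 0 := by
  rw [LinearMap.mem_ker, funext_iff]
  rfl

/- A component of the larger graph is a disjoint union of components of the smaller one, so its
coefficient sum is a sum of coefficient sums over components of the smaller graph. -/
theorem ker_rho_mono {G H : SimpleGraph Z} (hGH : G ≤ H) :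
    LinearMap.ker (rho G) ≤ LinearMap.ker (rho H) := by
  classical
  intro v hv
  rw [mem_ker_rho_iff] at hv ⊢
  intro c'
  have : Fintype G.ConnectedComponent :=
    Fintype.ofSurjective G.connectedComponentMk fun c => c.exists_rep
  let φ := SimpleGraph.ConnectedComponent.map (SimpleGraph.Hom.ofLE hGH)
  rw [← Finset.sum_fiberwise_of_maps_to (g := G.connectedComponentMk)
    (t := Finset.univ.filter fun c => φ c = c') fun z hz => by simpa [φ] using hz]
  refine Finset.sum_eq_zero fun c hc => ?_
  rw [Finset.mem_filter] at hc
  rw [Finset.filter_filter]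
  convert hv c using 2
  ext z
  simp only [Finset.mem_filter, Finset.mem_univ, true_and, and_iff_right_iff_imp]
  rintro rfl
  exact hc.2

theorem finrank_ker_rho_lt_card [Nonempty Z] (G : SimpleGraph Z) :
    finrank (ZMod 2) (LinearMap.ker (rho G)) < Fintype.card Z := by
  classical
  obtain ⟨z⟩ := ‹Nonempty Z›
  have hz : Pi.single z 1 ∉ LinearMap.ker (rho G) := by
    rw [mem_ker_rho_iff, not_forall]
    refine ⟨G.connectedComponentMk z, ?_⟩
    rw [Finset.filter_congr_decidable, Finset.sum_eq_single_of_mem z (by simp)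
      fun w _ hw => Pi.single_eq_of_ne hw 1]
    simp
  have hne : LinearMap.ker (rho G) ≠ ⊤ := fun htop => hz (by rw [htop]; exact Submodule.mem_top)
  simpa using Submodule.finrank_lt hne

theorem kerM_le_kerP (d : Z → Z → ℝ≥0) (b : ℝ≥0) : kerM d b ≤ kerP d b :=
  iSup_le fun r => ker_rho_mono (VR_le_VRc d r.2.le)

theorem kerP_le_kerM_of_lt (d : Z → Z → ℝ≥0) {r b : ℝ≥0} (hrb : r < b) :
    kerP d r ≤ kerM d b := by
  obtain ⟨s, hrs, hsb⟩ := exists_between hrb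
  exact (ker_rho_mono (VRc_le_VR_of_lt d hrs)).trans
    (le_iSup (fun r : {r : ℝ≥0 // r < b} => kerVR d r) ⟨s, hsb⟩)

theorem kerP_le_kerM_of_add_le {d₁ d₂ : Z → Z → ℝ≥0} {ε : ℝ≥0} (hε : 0 < ε)
    (h : ∀ x y, d₂ x y < d₁ x y + ε) {b c : ℝ≥0} (hbc : b + ε ≤ c) :
    kerP d₁ b ≤ kerM d₂ c := by
  classical
  let r := (Finset.univ.filter fun p : Z × Z => d₁ p.1 p.2 ≤ b).sup fun p => d₂ p.1 p.2
  have hle : ∀ x y, d₁ x y ≤ b → d₂ x y ≤ r := fun x y hxy =>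
    Finset.le_sup (f := fun p : Z × Z => d₂ p.1 p.2) (by simpa using hxy : (x, y) ∈ _)
  have hrc : r < c := by
    refine (Finset.sup_lt_iff ((hε.trans_le le_add_self).trans_le hbc)).mpr fun p hp => ?_
    rw [Finset.mem_filter] at hp
    exact (h p.1 p.2).trans_le ((add_le_add hp.2 le_rfl).trans hbc)
  have hgraph : VRc d₁ b ≤ VRc d₂ r := fun x y hxy => ⟨hxy.1, hle x y hxy.2.1, hle y x hxy.2.2⟩
  exact (ker_rho_mono hgraph).trans (kerP_le_kerM_of_lt d₂ hrc)

end Graphs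

section BlockFunction

variable {Z : Type*} [Fintype Z] {dX dZ : Z → Z → ℝ≥0}

theorem blockFn_eq_zero_of_lt_abs_sub {ε : ℝ≥0} (hε : 0 < ε)
    (h : ∀ x y, |(dX x y : ℝ) - (dZ x y : ℝ)| < ε) {a b : ℝ≥0}
    (hab : (ε : ℝ) < |(a : ℝ) - (b : ℝ)|) : blockFn dX dZ a b = 0 := by
  refine finrank_quotient_comap_subtype_eq_zero ?_
  have hXZ : ∀ x y, dX x y < dZ x y + ε := fun x y => by
    have := (abs_lt.mp (h x y)).2
    rw [← NNReal.coe_lt_coe]; push_cast; linarith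
  have hZX : ∀ x y, dZ x y < dX x y + ε := fun x y => by
    have := (abs_lt.mp (h x y)).1
    rw [← NNReal.coe_lt_coe]; push_cast; linarith
  rcases lt_abs.mp hab with hba | hab
  · have hincl : kerP dZ b ≤ kerM dX a :=
      kerP_le_kerM_of_add_le hε hXZ (by rw [← NNReal.coe_le_coe]; push_cast; linarith)
    exact le_sup_of_le_left (le_inf (inf_le_right.trans hincl) inf_le_right)
  · have hincl : kerP dX a ≤ kerM dZ b :=
      kerP_le_kerM_of_add_le hε hZX (by rw [← NNReal.coe_le_coe]; push_cast; linarith)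
    exact le_sup_of_le_right (le_inf inf_le_left (inf_le_left.trans hincl))

theorem blockFn_mul_abs_sub_pow_le {ε : ℝ≥0} (hε : 0 < ε)
    (h : ∀ x y, |(dX x y : ℝ) - (dZ x y : ℝ)| < ε) (a b : ℝ≥0) (q : ℕ) :
    (blockFn dX dZ a b : ℝ) * |(a : ℝ) - (b : ℝ)| ^ q ≤ blockFn dX dZ a b * (ε : ℝ) ^ q := by
  rcases le_or_gt |(a : ℝ) - (b : ℝ)| ε with hab | hab
  · gcongr
  · simp [blockFn_eq_zero_of_lt_abs_sub hε h hab]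

theorem blockFn_add_finrank_eq (a b : ℝ≥0) :
    blockFn dX dZ a b + finrank (ZMod 2) ↥(kerM dX a ⊔ kerP dX a ⊓ kerM dZ b)
      = finrank (ZMod 2) ↥(kerM dX a ⊔ kerP dX a ⊓ kerP dZ b) :=
  finrank_quotient_add_finrank_sup_inf (kerM_le_kerP dX a) (kerM_le_kerP dZ b)

theorem sum_blockFn_le_mult (a : ℝ≥0) (s : Finset ℝ≥0) :
    ∑ b ∈ s, blockFn dX dZ a b ≤ mult dX a := by
  let g b := finrank (ZMod 2) ↥(kerM dX a ⊔ kerP dX a ⊓ kerP dZ b)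
  let g' b := finrank (ZMod 2) ↥(kerM dX a ⊔ kerP dX a ⊓ kerM dZ b)
  have hblock : ∀ b, blockFn dX dZ a b = g b - g' b := fun b =>
    Nat.eq_sub_of_add_eq (blockFn_add_finrank_eq a b)
  rw [Finset.sum_congr rfl fun b _ => hblock b]
  exact sum_sub_le_of_jumps
    (fun b => Submodule.finrank_mono (sup_le_sup_left (inf_le_inf_left _ (kerM_le_kerP dZ b)) _))
    (fun r b hrb => Submodule.finrank_mono
      (sup_le_sup_left (inf_le_inf_left _ (kerP_le_kerM_of_lt dZ hrb)) _))
    (fun b => Submodule.finrank_mono le_sup_left)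
    (fun b => Submodule.finrank_mono (sup_le (kerM_le_kerP dX a) inf_le_left)) s

theorem sum_mult_le [Nonempty Z] (d : Z → Z → ℝ≥0) (s : Finset ℝ≥0) :
    ∑ a ∈ s, mult d a ≤ Fintype.card Z - 1 := by
  have hbound : ∀ a, finrank (ZMod 2) (kerP d a) ≤ Fintype.card Z - 1 := fun a =>
    Nat.le_sub_one_of_lt (finrank_ker_rho_lt_card (VRc d a))
  exact sum_sub_le_of_jumps (l := 0) (fun a => Submodule.finrank_mono (kerM_le_kerP d a))
    (fun r a hra => Submodule.finrank_mono (kerP_le_kerM_of_lt d hra)) (fun _ => Nat.zero_le _)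
    hbound s

theorem sum_blockFn_le [Nonempty Z] (s : Finset (ℝ≥0 × ℝ≥0)) :
    ∑ p ∈ s, blockFn dX dZ p.1 p.2 ≤ Fintype.card Z - 1 := by
  classical
  let A := s.image Prod.fst
  let B := s.image Prod.snd
  calc ∑ p ∈ s, blockFn dX dZ p.1 p.2
      ≤ ∑ p ∈ A ×ˢ B, blockFn dX dZ p.1 p.2 := Finset.sum_le_sum_of_subset fun p hp =>
        Finset.mem_product.mpr ⟨Finset.mem_image_of_mem _ hp, Finset.mem_image_of_mem _ hp⟩
    _ = ∑ a ∈ A, ∑ b ∈ B, blockFn dX dZ a b := Finset.sum_product A B _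
    _ ≤ ∑ a ∈ A, mult dX a := Finset.sum_le_sum fun a _ => sum_blockFn_le_mult a B
    _ ≤ Fintype.card Z - 1 := sum_mult_le dX A

end BlockFunction

theorem rpow_one_div_le_of_le_mul_pow {x c e : ℝ} {q : ℕ} (hx : 0 ≤ x) (hc : 0 ≤ c)
    (he : 0 ≤ e) (hq : q ≠ 0) (h : x ≤ c * e ^ q) :
    x ^ ((1 : ℝ) / q) ≤ c ^ ((1 : ℝ) / q) * e :=
  calc x ^ ((1 : ℝ) / q) ≤ (c * e ^ q) ^ ((1 : ℝ) / q) := Real.rpow_le_rpow hx h (by positivity)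
    _ = c ^ ((1 : ℝ) / q) * e := by
      rw [Real.mul_rpow hc (by positivity), one_div, Real.pow_rpow_inv_natCast he hq]

theorem stmt11_general {n : ℕ} (hn : 0 < n) (dX dZ : Fin n → Fin n → ℝ≥0)
    (ε : ℝ≥0) (hε : 0 < ε)
    (h : ∀ x y : Fin n, |(dX x y : ℝ) - (dZ x y : ℝ)| < ε)
    (q : ℕ) (hq : 1 ≤ q) :
    (∑ᶠ p : ℝ≥0 × ℝ≥0, (blockFn dX dZ p.1 p.2 : ℝ) * |(p.1 : ℝ) - (p.2 : ℝ)| ^ q)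
        ^ ((1 : ℝ) / q)
      ≤ ((n : ℝ) - 1) ^ ((1 : ℝ) / q) * ε := by
  have : Nonempty (Fin n) := ⟨⟨0, hn⟩⟩
  have hsum : ∀ s : Finset (ℝ≥0 × ℝ≥0), ∑ p ∈ s, blockFn dX dZ p.1 p.2 ≤ n - 1 := by
    simpa using sum_blockFn_le (dX := dX) (dZ := dZ)
  have hfin := finite_support_of_forall_sum_le hsum
  rw [finsum_eq_sum_of_support_subset _ (s := hfin.toFinset) fun p hp => by
    simpa using left_ne_zero_of_mul hp]
  refine rpow_one_div_le_of_le_mul_pow (Finset.sum_nonneg fun p _ => by positivity)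
    (sub_nonneg.mpr (by exact_mod_cast hn)) ε.2 (by omega) ?_
  calc ∑ p ∈ hfin.toFinset, (blockFn dX dZ p.1 p.2 : ℝ) * |(p.1 : ℝ) - (p.2 : ℝ)| ^ q
      ≤ ∑ p ∈ hfin.toFinset, (blockFn dX dZ p.1 p.2 : ℝ) * (ε : ℝ) ^ q :=
        Finset.sum_le_sum fun p _ => blockFn_mul_abs_sub_pow_le hε h p.1 p.2 q
    _ = (∑ p ∈ hfin.toFinset, blockFn dX dZ p.1 p.2 : ℕ) * (ε : ℝ) ^ q := by
        rw [Nat.cast_sum, Finset.sum_mul]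
    _ ≤ ((n : ℝ) - 1) * (ε : ℝ) ^ q := by
        gcongr
        rw [← Nat.cast_pred hn]
        exact_mod_cast hsum _

/-- continuity of the induced matching distance: if
`|d_X(x,y) − d_Z(f x, f y)| < ε` for all `x, y` (with `f` the relabelling bijection
`x_i ↦ z_i`), then `d_f^q(B(X), B(Z)) = (Σ_{a,b} M_f(a,b)·|a−b|^q)^{1/q} ≤ (n−1)^{1/q}·ε`. -/
theorem stmt11 {n : ℕ} (hn : 0 < n) (dX dZ : Fin n → Fin n → ℝ≥0)
    (hsX : ∀ i j, dX i j = dX j i) (hsZ : ∀ i j, dZ i j = dZ j i)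
    (ε : ℝ≥0) (hε : 0 < ε)
    (h : ∀ x y : Fin n, |(dX x y : ℝ) - (dZ x y : ℝ)| < ε)
    (q : ℕ) (hq : 1 ≤ q) :
    (∑ᶠ p : ℝ≥0 × ℝ≥0, (blockFn dX dZ p.1 p.2 : ℝ) * |(p.1 : ℝ) - (p.2 : ℝ)| ^ q)
        ^ ((1 : ℝ) / q)
      ≤ ((n : ℝ) - 1) ^ ((1 : ℝ) / q) * ε :=
  stmt11_general hn dX dZ ε hε h q hq
end
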